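/- Let M and N be integers with 1 ≤ N < M, and let s : ℤ → ℝ satisfy s(j) = 0 whenever j < 0 or j > N − 1. Let S be the M × (M−N+1) complex matrix with entries S_{n,m} = s(n − m) for 1 ≤ n ≤ M, 1 ≤ m ≤ M−N+1, and for a real f and T_s > 0 let F(f) be the M × M diagonal matrix with diagonal entries exp(i·2π·f·T_s·(n−1)), n = 1,…,M. Let A : ℤ × ℤ → ℂ satisfy A(a,b) = 0 whenever |a − b| ≥ 2, whenever b = 1, whenever a < 1 or b < 1, and whenever a > M−N+1 or b > M−N+1, and regard A as the (M−N+1)×(M−N+1) matrix with entries A(a,b). Let f_max > 0 be such that 2·f_max·T_s is a positive integer. Then the matrix (1/(2 f_max)) ∫_{−f_max}^{f_max} F(f)·S·A·Sᴴ·F(f)ᴴ df is diagonal, and its (n,n) entry equals Σ_{k'=2}^{M−N+1} Σ_{k₁=k'−1}^{k'+1} A(k₁,k') · s(n − k₁) · s(n − k'). (Equations (30)–(31): after averaging over a uniformly distributed carrier frequency offset, the variance of the pilot-contamination term is a diagonal matrix D with the stated diagonal entries.) -/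

import Mathlib

open Matrix MeasureTheory

/-- The M × (M−N+1) Toeplitz pilot matrix with entries S_{n,m} = s(n−m) (1-based),
built from the zero-extended real pilot sequence s. -/
noncomputable def Smat (M N : ℕ) (s : ℤ → ℝ) : Matrix (Fin M) (Fin (M - N + 1)) ℂ :=
  fun i j => ((s ((i : ℤ) - (j : ℤ)) : ℝ) : ℂ)

/-- The M × M diagonal CFO matrix with diagonal entries exp(i·2π·f·T_s·(n−1)) (1-based). -/
noncomputable def Fmat (M : ℕ) (Ts f : ℝ) : Matrix (Fin M) (Fin M) ℂ :=
  Matrix.diagonal (fun i => Complex.exp (Complex.I * Complex.ofReal (2 * Real.pi * f * Ts * ((i : ℕ) : ℝ))))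

/-- The (M−N+1) × (M−N+1) matrix with (1-based) entries A(a,b). -/
noncomputable def Amat (M N : ℕ) (A : ℤ → ℤ → ℂ) : Matrix (Fin (M - N + 1)) (Fin (M - N + 1)) ℂ :=
  fun a b => A ((a : ℤ) + 1) ((b : ℤ) + 1)

/-- Reindex a sum over `Fin L` (shifted by one) as a sum over `Finset.Icc 1 L` in `ℤ`. -/
lemma sum_fin_eq_sum_Icc {β : Type*} [AddCommMonoid β] (L : ℕ) (h : ℤ → β) :
    ∑ a : Fin L, h ((a : ℤ) + 1) = ∑ k ∈ Finset.Icc (1 : ℤ) (L : ℤ), h k := by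
  refine Finset.sum_bij' (i := fun (a : Fin L) _ => (a : ℤ) + 1)
    (j := fun k hk => (⟨(k - 1).toNat, by
      simp only [Finset.mem_Icc] at hk; omega⟩ : Fin L)) ?_ ?_ ?_ ?_ ?_
  · intro a _
    simp only [Finset.mem_Icc]
    omega
  · intro k hk
    exact Finset.mem_univ _
  · intro a _
    apply Fin.ext
    simp only []
    omega
  · intro k hk
    simp only [Finset.mem_Icc] at hk
    simp only []
    omega
  · intro a _
    rfl

/-- Equations (30)–(31): after averaging over a CFO uniformly distributed on [−f_max, f_max]
(with 2·f_max·T_s a positive integer), the matrix (1/(2f_max)) ∫ F(f)·S·A·Sᴴ·F(f)ᴴ df is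
diagonal, with (n,n) entry Σ_{k'=2}^{M−N+1} Σ_{k₁=k'−1}^{k'+1} A(k₁,k')·s(n−k₁)·s(n−k'). -/
theorem cfo_averaged_quadratic_form_diagonal
    (M N : ℕ) (hN : 1 ≤ N) (hNM : N < M)
    (s : ℤ → ℝ) (hs : ∀ j : ℤ, j < 0 ∨ j > (N : ℤ) - 1 → s j = 0)
    (Ts : ℝ) (hTs : 0 < Ts)
    (fmax : ℝ) (hfmax : 0 < fmax)
    (hint : ∃ k : ℤ, 0 < k ∧ 2 * fmax * Ts = (k : ℝ))
    (A : ℤ → ℤ → ℂ)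
    (hA : ∀ a b : ℤ,
      (2 ≤ |a - b| ∨ b = 1 ∨ a < 1 ∨ b < 1 ∨ a > (M : ℤ) - (N : ℤ) + 1 ∨ b > (M : ℤ) - (N : ℤ) + 1) →
        A a b = 0) :
    ∀ i j : Fin M,
      ((1 / (2 * fmax) : ℝ) : ℂ) *
          ∫ f in (-fmax)..fmax,
            (Fmat M Ts f * Smat M N s * Amat M N A * (Smat M N s)ᴴ * (Fmat M Ts f)ᴴ) i j
        = if i = j then
            ∑ k' ∈ Finset.Icc (2 : ℤ) ((M : ℤ) - (N : ℤ) + 1),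
              ∑ k₁ ∈ Finset.Icc (k' - 1) (k' + 1),
                A k₁ k' * ((s ((i : ℤ) + 1 - k₁) : ℝ) : ℂ) * ((s ((i : ℤ) + 1 - k') : ℝ) : ℂ)
          else 0 := by
  intro i j
  obtain ⟨k, hkpos, hkeq⟩ := hint
  set Lz : ℤ := (M : ℤ) - (N : ℤ) + 1 with hLz
  have hLcast : ((M - N + 1 : ℕ) : ℤ) = Lz := by omega
  set B : Matrix (Fin M) (Fin M) ℂ := Smat M N s * Amat M N A * (Smat M N s)ᴴ with hB
  set c : ℂ := Complex.I *
      ((2 * Real.pi * Ts * (((i : ℕ) : ℝ) - ((j : ℕ) : ℝ)) : ℝ) : ℂ) with hc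
  -- Step 1: the integrand at frequency f
  have key : ∀ f : ℝ,
      (Fmat M Ts f * Smat M N s * Amat M N A * (Smat M N s)ᴴ * (Fmat M Ts f)ᴴ) i j
        = Complex.exp (c * (f : ℂ)) * B i j := by
    intro f
    have hFH : (Fmat M Ts f)ᴴ = Matrix.diagonal
        (fun n : Fin M => Complex.exp
          (-(Complex.I * ((2 * Real.pi * f * Ts * ((n : ℕ) : ℝ) : ℝ) : ℂ)))) := by
      simp only [Fmat, Matrix.diagonal_conjTranspose]
      refine congrArg Matrix.diagonal (funext fun n => ?_)
      simp only [Pi.star_apply, Complex.star_def, ← Complex.exp_conj, _root_.map_mul,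
        Complex.conj_I, Complex.conj_ofReal]
      ring_nf
    rw [Matrix.mul_assoc (Fmat M Ts f), Matrix.mul_assoc (Fmat M Ts f)]
    rw [show Smat M N s * Amat M N A * (Smat M N s)ᴴ = B from rfl] at *
    rw [hFH, Matrix.mul_diagonal]
    simp only [Fmat, Matrix.diagonal_mul]
    rw [mul_right_comm, ← Complex.exp_add]
    congr 2
    simp only [hc]
    push_cast
    ring
  -- Step 2: compute the integral
  have hInt : (∫ f in (-fmax)..fmax,
      (Fmat M Ts f * Smat M N s * Amat M N A * (Smat M N s)ᴴ * (Fmat M Ts f)ᴴ) i j)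
        = (∫ f in (-fmax)..fmax, Complex.exp (c * (f : ℂ))) * B i j := by
    simp_rw [key]
    exact intervalIntegral.integral_mul_const _ _
  by_cases hij : i = j
  · -- diagonal case
    subst hij
    have hc0 : c = 0 := by
      simp [hc]
    rw [hInt, hc0]
    simp only [zero_mul, Complex.exp_zero, if_pos]
    rw [intervalIntegral.integral_const]
    have hscal : ((1 / (2 * fmax) : ℝ) : ℂ) * ((fmax - -fmax) • (1 : ℂ) * B i i) = B i i := by
      rw [Complex.real_smul, mul_one, ← mul_assoc]
      have hne : ((2 * fmax : ℝ) : ℂ) ≠ 0 :=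
        Complex.ofReal_ne_zero.mpr (by positivity)
      have h1 : ((fmax - -fmax : ℝ) : ℂ) = ((2 * fmax : ℝ) : ℂ) := by push_cast; ring
      rw [h1, Complex.ofReal_div, Complex.ofReal_one, div_mul_cancel₀ _ hne, one_mul]
    rw [hscal]
    -- Step 3: identify the diagonal entry with the double sum
    -- the summand, as a function of integer indices
    set g : ℤ → ℤ → ℂ := fun k₁ k' =>
      A k₁ k' * ((s ((i : ℤ) + 1 - k₁) : ℝ) : ℂ) * ((s ((i : ℤ) + 1 - k') : ℝ) : ℂ) with hg
    have hT1 : B i i = ∑ k' ∈ Finset.Icc (1 : ℤ) Lz, ∑ k₁ ∈ Finset.Icc (1 : ℤ) Lz, g k₁ k' := by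
      rw [← hLcast]
      rw [← sum_fin_eq_sum_Icc (M - N + 1) (fun k' => ∑ k₁ ∈ Finset.Icc (1 : ℤ) ((M - N + 1 : ℕ) : ℤ), g k₁ k')]
      simp only [hB, Matrix.mul_apply, Matrix.conjTranspose_apply, Smat, Amat,
        Complex.star_def, Complex.conj_ofReal]
      refine Finset.sum_congr rfl (fun b _ => ?_)
      rw [← sum_fin_eq_sum_Icc (M - N + 1) (fun k₁ => g k₁ ((b : ℤ) + 1))]
      rw [Finset.sum_mul]
      refine Finset.sum_congr rfl (fun a _ => ?_)
      simp only [hg]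
      have e1 : (i : ℤ) + 1 - ((a : ℤ) + 1) = (i : ℤ) - (a : ℤ) := by ring
      have e2 : (i : ℤ) + 1 - ((b : ℤ) + 1) = (i : ℤ) - (b : ℤ) := by ring
      rw [e1, e2]
      ring
    have hsub : ∀ k' ∈ Finset.Icc (2 : ℤ) Lz,
        (∑ k₁ ∈ Finset.Icc (k' - 1) (k' + 1), g k₁ k')
          = ∑ k₁ ∈ Finset.Icc (1 : ℤ) Lz, g k₁ k' := by
      intro k' hk'
      simp only [Finset.mem_Icc] at hk'
      have e1 : (∑ k₁ ∈ Finset.Icc (k' - 1) (k' + 1), g k₁ k')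
          = ∑ k₁ ∈ Finset.Icc (0 : ℤ) (Lz + 1), g k₁ k' := by
        refine Finset.sum_subset ?_ ?_
        · intro x hx
          simp only [Finset.mem_Icc] at hx ⊢
          omega
        · intro x hx hx'
          simp only [Finset.mem_Icc, not_and_or, not_le] at hx hx'
          have hax : A x k' = 0 := by
            refine hA x k' (Or.inl ?_)
            rcases abs_cases (x - k') with ⟨h1, h2⟩ | ⟨h1, h2⟩ <;> omega
          simp [hg, hax]
      have e2 : (∑ k₁ ∈ Finset.Icc (1 : ℤ) Lz, g k₁ k')
          = ∑ k₁ ∈ Finset.Icc (0 : ℤ) (Lz + 1), g k₁ k' := by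
        refine Finset.sum_subset ?_ ?_
        · intro x hx
          simp only [Finset.mem_Icc] at hx ⊢
          omega
        · intro x hx hx'
          simp only [Finset.mem_Icc, not_and_or, not_le] at hx hx'
          have hax : A x k' = 0 := by
            rcases hx' with h | h
            · exact hA x k' (Or.inr (Or.inr (Or.inl (by omega))))
            · exact hA x k' (Or.inr (Or.inr (Or.inr (Or.inr (Or.inl (by omega))))))
          simp [hg, hax]
      rw [e1, ← e2]
    have hT2 : (∑ k' ∈ Finset.Icc (2 : ℤ) Lz, ∑ k₁ ∈ Finset.Icc (k' - 1) (k' + 1), g k₁ k')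
        = ∑ k' ∈ Finset.Icc (1 : ℤ) Lz, ∑ k₁ ∈ Finset.Icc (1 : ℤ) Lz, g k₁ k' := by
      rw [Finset.sum_congr rfl hsub]
      refine Finset.sum_subset ?_ ?_
      · intro x hx
        simp only [Finset.mem_Icc] at hx ⊢
        omega
      · intro x hx hx'
        simp only [Finset.mem_Icc, not_and_or, not_le] at hx hx'
        have hx1 : x = 1 := by omega
        subst hx1
        refine Finset.sum_eq_zero (fun k₁ _ => ?_)
        have hak : A k₁ 1 = 0 := hA k₁ 1 (Or.inr (Or.inl rfl))
        simp [hg, hak]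
    rw [hT1, ← hT2]
  · -- off-diagonal case
    rw [if_neg hij]
    have hdelta : ((i : ℕ) : ℝ) ≠ ((j : ℕ) : ℝ) := by
      simp only [ne_eq, Nat.cast_inj]
      exact fun h => hij (Fin.ext h)
    have hc0 : c ≠ 0 := by
      simp only [hc, ne_eq, mul_eq_zero, Complex.I_ne_zero, false_or, Complex.ofReal_eq_zero]
      push_neg
      exact ⟨⟨⟨by norm_num, Real.pi_ne_zero⟩, hTs.ne'⟩, sub_ne_zero.mpr hdelta⟩
    rw [hInt, integral_exp_mul_complex hc0]
    have hker : Complex.exp (c * (fmax : ℂ)) - Complex.exp (c * ((-fmax : ℝ) : ℂ)) = 0 := by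
      have h2c : Complex.exp (2 * (c * (fmax : ℂ))) = 1 := by
        have harg : 2 * (c * (fmax : ℂ)) = ((k * ((i : ℤ) - (j : ℤ)) : ℤ) : ℂ) *
            (2 * (Real.pi : ℂ) * Complex.I) := by
          have hk' : ((2 * fmax * Ts : ℝ) : ℂ) = ((k : ℤ) : ℂ) := by
            exact_mod_cast congrArg Complex.ofReal hkeq
          simp only [hc]
          push_cast
          push_cast at hk'
          linear_combination (2 * (Real.pi : ℂ) * (((i : ℕ) : ℂ) - ((j : ℕ) : ℂ)) * Complex.I) * hk'
        rw [harg, Complex.exp_int_mul_two_pi_mul_I]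
      have : Complex.exp (c * ((-fmax : ℝ) : ℂ)) * Complex.exp (2 * (c * (fmax : ℂ)))
          = Complex.exp (c * (fmax : ℂ)) := by
        rw [← Complex.exp_add]
        congr 1
        push_cast
        ring
      rw [← this, h2c, mul_one, sub_self]
    rw [hker, zero_div, zero_mul, mul_zero]
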